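/- Let G be a connected finite graph on at least three vertices such that d(u) ≥ (1/2)|M_3(u)| for every vertex u ∈ V(G). Then G is Hamiltonian. -/

import Mathlib

/-!
Take a longest cycle `C`, with successor map `σ` (the identity off `C`), and suppose a vertex `x`
off `C` is adjacent to `u ∈ C`; put `y = σ u`. Maximality of `C` rules out `x ~ y`, a common
neighbour of `x` and `y` off `C`, and a pair `x ~ v`, `y ~ σ v` with `v ∈ C` (reverse the arc of
`C` from `y` to `v` and route it through `x`). Hence `σ(N(x))`, `N(y)` and `{x}` are disjoint
subsets of `M_3(x)`, and `σ⁻¹(N(y))`, `N(x)` and `{x}` are disjoint subsets of `M_3(y)`. So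
`d(x) + d(y) < |M_3(x)| ≤ 2 d(x)` and `d(x) + d(y) < |M_3(y)| ≤ 2 d(y)`, which is absurd.
A cycle exists because `G` is not a tree: a leaf `u` with neighbour `v` would give
`1 + d(v) ≤ |M_3(u)| ≤ 2`, so `{u, v}` would be closed under adjacency and `G = K₂`.
-/

open SimpleGraph

/-- `Mball G r u` is the set of vertices at distance at most `r` from `u`
(the vertex set of the ball `G_r(u)`; the ball itself is `G.induce (Mball G r u)`). -/
def Mball {V : Type*} (G : SimpleGraph V) (r : ℕ) (u : V) : Set V := {v | G.edist u v ≤ r}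

/-- `Nsphere G r u` is the set of vertices at distance exactly `r` from `u`. -/
def Nsphere {V : Type*} (G : SimpleGraph V) (r : ℕ) (u : V) : Set V := {v | G.edist u v = r}

/-- The degree of a vertex, as the cardinality of its neighborhood. -/
noncomputable def deg {V : Type*} (G : SimpleGraph V) (u : V) : ℕ := (G.neighborSet u).ncard

/-- The (vertex) connectivity of a graph: the smallest number of vertices whose removal
turns it into a disconnected or trivial (one-vertex) graph. -/
noncomputable def kappa {V : Type*} (G : SimpleGraph V) : ℕ :=
  sInf {n | ∃ s : Set V, s.Finite ∧ s.ncard = n ∧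
    (¬ (G.induce sᶜ).Connected ∨ sᶜ.ncard = 1)}

/-- The independence number of a graph: the maximum size of a set of
pairwise nonadjacent vertices. -/
noncomputable def alpha {V : Type*} (G : SimpleGraph V) : ℕ :=
  sSup {n | ∃ s : Set V, s.Finite ∧ s.ncard = n ∧ s.Pairwise (fun a b => ¬ G.Adj a b)}

theorem List.exists_isRotated_cons_of_mem {α : Type*} {l : List α} {a : α} (ha : a ∈ l) :
    ∃ t, l ~r a :: t := by
  obtain ⟨s, t, rfl⟩ := List.append_of_mem ha
  exact ⟨t ++ s, List.isRotated_append⟩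

theorem List.formPerm_append_cons_cons {α : Type*} [DecidableEq α] {s r : List α} {a b : α}
    (hl : (s ++ a :: b :: r).Nodup) : (s ++ a :: b :: r).formPerm a = b := by
  have hrot : s ++ a :: b :: r ~r a :: b :: (r ++ s) := by
    simpa using (List.isRotated_append (l := s) (l' := a :: b :: r))
  rw [List.formPerm_eq_of_isRotated hl hrot,
    List.formPerm_apply_head _ _ _ (hrot.nodup_iff.1 hl)]

theorem SimpleGraph.Adj.edist_le_one {V : Type*} {G : SimpleGraph V} {u v : V} (h : G.Adj u v) :
    G.edist u v ≤ 1 :=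
  (edist_eq_one_iff_adj.2 h).le

theorem SimpleGraph.Preconnected.exists_adj_mem_notMem {V : Type*} {G : SimpleGraph V}
    (hG : G.Preconnected) {S : Set V} {a b : V} (ha : a ∈ S) (hb : b ∉ S) :
    ∃ x ∈ S, ∃ y ∉ S, G.Adj x y := by
  obtain ⟨d, -, hd⟩ := (hG a b).some.exists_boundary_dart S ha hb
  exact ⟨_, hd.1, _, hd.2, d.adj⟩

section

variable {V : Type*} {G : SimpleGraph V}

-- The vertices of a cycle of `G` in cyclic order; `l.formPerm` is then the successor map.
structure IsCycleList (G : SimpleGraph V) (l : List V) : Prop where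
  nodup : l.Nodup
  three_le_length : 3 ≤ l.length
  isChain : l.IsChain G.Adj
  adj_getLast_head : ∀ a ∈ l.getLast?, ∀ b ∈ l.head?, G.Adj a b

namespace IsCycleList

variable {l l' : List V}

theorem ne_nil (h : IsCycleList G l) : l ≠ [] := by
  rintro rfl
  simpa using h.three_le_length

theorem tail_ne_nil {u : V} {t : List V} (h : IsCycleList G (u :: t)) : t ≠ [] := by
  rintro rfl
  simpa using h.three_le_length

theorem insert {u : V} {t : List V} (h : IsCycleList G (u :: t)) {L : List V}
    (hLnd : L.Nodup) (hLC : ∀ a ∈ L, a ∉ u :: t) (hL : L.IsChain G.Adj)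
    (huL : ∀ a ∈ L.head?, G.Adj u a)
    (hLt : ∀ a ∈ L.getLast?, ∀ b ∈ t.head?, G.Adj a b) :
    IsCycleList G (u :: (L ++ t)) := by
  rcases eq_or_ne L [] with rfl | hLne
  · simpa using h
  refine ⟨?_, ?_, ?_, ?_⟩
  · have := h.nodup
    simp only [List.nodup_cons, List.nodup_append, List.mem_append, not_or] at this ⊢
    grind
  · have := h.three_le_length
    simp only [List.length_cons, List.length_append] at this ⊢
    omega
  · rw [← List.cons_append, List.isChain_append]
    refine ⟨List.isChain_cons.2 ⟨huL, hL⟩, h.isChain.tail, ?_⟩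
    simpa [List.getLast?_cons, List.getLast?_eq_some_getLast hLne] using hLt
  · simpa [List.getLast?_cons, List.getLast?_append, List.getLast?_eq_some_getLast h.tail_ne_nil]
      using h.adj_getLast_head

theorem insert_reverse {u x : V} {P Q : List V} (h : IsCycleList G (u :: (P ++ Q)))
    (hP : P ≠ []) (hx : x ∉ u :: (P ++ Q)) (hux : G.Adj u x)
    (hxP : ∀ a ∈ P.getLast?, G.Adj x a)
    (hPQ : ∀ a ∈ P.head?, ∀ b ∈ Q.head?, G.Adj a b) :
    IsCycleList G (u :: x :: (P.reverse ++ Q)) := by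
  have hchain := h.isChain
  rw [List.isChain_cons, List.isChain_append] at hchain
  obtain ⟨huP, hPc, hQc, -⟩ := hchain
  refine ⟨?_, ?_, ?_, ?_⟩
  · have := h.nodup
    simp only [List.nodup_cons, List.nodup_append, List.nodup_reverse, List.mem_append,
      List.mem_reverse, List.mem_cons, not_or] at this hx ⊢
    grind
  · have := h.three_le_length
    simp only [List.length_cons, List.length_append, List.length_reverse] at this ⊢
    omega
  · refine List.IsChain.cons_cons hux ?_
    rw [← List.cons_append, List.isChain_append]
    refine ⟨List.isChain_cons.2 ⟨by simpa using hxP, ?_⟩, hQc, ?_⟩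
    · exact List.isChain_reverse.2 (hPc.imp fun _ _ hab => hab.symm)
    · simpa [List.getLast?_cons, List.getLast?_reverse, List.head?_eq_some_head hP] using hPQ
  · rcases eq_or_ne Q [] with rfl | hQ
    · simpa [List.getLast?_cons, List.getLast?_reverse, List.head?_eq_some_head hP, G.adj_comm]
        using huP
    · simpa [List.getLast?_cons, List.getLast?_append, List.getLast?_eq_some_getLast hQ]
        using h.adj_getLast_head

variable [DecidableEq V]

theorem adj_formPerm (h : IsCycleList G l) {x : V} (hx : x ∈ l) : G.Adj x (l.formPerm x) := by
  obtain ⟨i, hi, rfl⟩ := List.mem_iff_getElem.1 hx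
  rw [List.formPerm_apply_getElem l h.nodup i hi]
  by_cases hlast : i + 1 < l.length
  · simpa only [Nat.mod_eq_of_lt hlast] using List.isChain_iff_getElem.1 h.isChain i hlast
  · obtain rfl : i = l.length - 1 := by omega
    apply h.adj_getLast_head <;>
      simp [List.getLast?_eq_getElem?, List.head?_eq_getElem?,
        Nat.sub_add_cancel (by omega : 1 ≤ l.length)]

theorem of_adj_formPerm (hnd : l.Nodup) (hlen : 3 ≤ l.length)
    (hadj : ∀ x ∈ l, G.Adj x (l.formPerm x)) : IsCycleList G l where
  nodup := hnd
  three_le_length := hlen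
  isChain := List.isChain_iff_getElem.2 fun i hi => by
    simpa [List.formPerm_apply_getElem l hnd i (by omega), Nat.mod_eq_of_lt hi]
      using hadj l[i] (List.getElem_mem _)
  adj_getLast_head := by
    obtain ⟨x, xs, rfl⟩ :=
      List.exists_cons_of_ne_nil (List.ne_nil_of_length_pos (l := l) (by omega))
    intro a ha b hb
    simp only [List.getLast?_eq_some_getLast (List.cons_ne_nil x xs), Option.mem_def,
      Option.some.injEq, List.head?_cons] at ha hb
    subst ha hb
    simpa [List.formPerm_apply_getLast] using hadj _ (List.getLast_mem _)

theorem of_isRotated (h : IsCycleList G l) (hr : l ~r l') : IsCycleList G l' :=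
  of_adj_formPerm (hr.nodup_iff.1 h.nodup) (hr.perm.length_eq ▸ h.three_le_length) fun x hx => by
    rw [← List.formPerm_eq_of_isRotated h.nodup hr]
    exact h.adj_formPerm (hr.mem_iff.2 hx)

theorem edist_formPerm_le_one (h : IsCycleList G l) (v : V) : G.edist v (l.formPerm v) ≤ 1 := by
  by_cases hv : v ∈ l
  · exact (h.adj_formPerm hv).edist_le_one
  · simp [List.formPerm_apply_of_notMem hv]

theorem edist_formPerm_symm_le_one (h : IsCycleList G l) (v : V) :
    G.edist v (l.formPerm.symm v) ≤ 1 := by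
  simpa [SimpleGraph.edist_comm] using h.edist_formPerm_le_one (l.formPerm.symm v)

end IsCycleList

theorem SimpleGraph.Walk.IsCycle.isCycleList_support_tail {v : V} {c : G.Walk v v}
    (hc : c.IsCycle) : IsCycleList G c.support.tail := by
  cases c with
  | nil => exact absurd hc not_isCycle_nil
  | cons h q =>
    refine ⟨by simpa using hc.support_nodup, ?_, q.isChain_adj_support, ?_⟩
    · simpa using hc.three_le_length
    · simpa [List.getLast?_eq_some_getLast, List.head?_eq_some_head] using h

theorem IsCycleList.isHamiltonian [Fintype V] [DecidableEq V] {l : List V}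
    (h : IsCycleList G l) (hl : ∀ v, v ∈ l) : G.IsHamiltonian := by
  intro _
  have hwrap : G.Adj (l.getLast h.ne_nil) (l.head h.ne_nil) :=
    h.adj_getLast_head _ (List.getLast?_eq_some_getLast _) _ (List.head?_eq_some_head _)
  refine ⟨_, Walk.cons hwrap (Walk.ofSupport l h.ne_nil h.isChain), ?_⟩
  rw [Walk.isHamiltonianCycle_iff_isCycle_and_support_count_tail_eq_one,
    Walk.isCycle_iff_isPath_tail_and_le_length]
  have := h.three_le_length
  refine ⟨⟨?_, ?_⟩, fun v => ?_⟩
  · simpa [Walk.isPath_def] using h.nodup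
  · simp only [Walk.length_cons, Walk.length_ofSupport]
    omega
  · simpa using List.count_eq_one_of_mem h.nodup (hl v)

structure IsLongestCycleList (G : SimpleGraph V) (C : List V) : Prop where
  isCycleList : IsCycleList G C
  length_le : ∀ l, IsCycleList G l → l.length ≤ C.length

theorem IsCycleList.exists_isLongestCycleList [Finite V] {l : List V} (hl : IsCycleList G l) :
    ∃ C, IsLongestCycleList G C := by
  have := Fintype.ofFinite V
  let lengths := {n | ∃ l : List V, IsCycleList G l ∧ l.length = n}
  have hbdd : BddAbove lengths := ⟨Fintype.card V, by
    rintro _ ⟨l, hl, rfl⟩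
    exact hl.nodup.length_le_card⟩
  obtain ⟨C, hC, hlen⟩ := Nat.sSup_mem (s := lengths) ⟨_, l, hl, rfl⟩ hbdd
  exact ⟨C, hC, fun l hl => hlen ▸ le_csSup hbdd ⟨l, hl, rfl⟩⟩

namespace IsLongestCycleList

variable [DecidableEq V] {C : List V} (hC : IsLongestCycleList G C)
include hC

theorem not_adj_of_insert {w : V} (hw : w ∈ C) {L : List V} (hL : L ≠ []) (hLnd : L.Nodup)
    (hLC : ∀ a ∈ L, a ∉ C) (hLc : L.IsChain G.Adj) (hwL : ∀ a ∈ L.head?, G.Adj w a) :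
    ∀ a ∈ L.getLast?, ¬ G.Adj a (C.formPerm w) := by
  intro a ha hadj
  obtain ⟨t, hr⟩ := List.exists_isRotated_cons_of_mem hw
  have hwt := hC.isCycleList.of_isRotated hr
  obtain ⟨b, t, rfl⟩ := List.exists_cons_of_ne_nil hwt.tail_ne_nil
  rw [List.formPerm_eq_of_isRotated hC.isCycleList.nodup hr,
    List.formPerm_apply_head _ _ _ hwt.nodup] at hadj
  have hlonger := hC.length_le _ (hwt.insert hLnd (fun a ha => hr.mem_iff.not.1 (hLC a ha)) hLc hwL
    (by simpa [Option.mem_def.1 ha] using hadj))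
  have hLpos := List.length_pos_iff.2 hL
  have := hr.perm.length_eq
  simp only [List.length_cons, List.length_append] at hlonger this
  omega

theorem not_adj_formPerm_of_mem {u x v : V} (hu : u ∈ C) (hx : x ∉ C) (hux : G.Adj u x)
    (hv : v ∈ C) (hxv : G.Adj x v) : ¬ G.Adj (C.formPerm u) (C.formPerm v) := by
  intro hadj
  rcases eq_or_ne v u with rfl | hvu
  · exact G.irrefl hadj
  obtain ⟨t, hr⟩ := List.exists_isRotated_cons_of_mem hu
  have hut := hC.isCycleList.of_isRotated hr
  have hσ := List.formPerm_eq_of_isRotated hC.isCycleList.nodup hr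
  have hvt : v ∈ t := (List.mem_cons.1 (hr.mem_iff.1 hv)).resolve_left hvu
  obtain ⟨A, B, rfl⟩ := List.append_of_mem hvt
  rcases B with _ | ⟨b, B⟩
  · -- `v` precedes `u` on `C`, so `x` fits in between.
    have hσv : C.formPerm v = u := by simp [hσ]
    exact hC.not_adj_of_insert hv (L := [x]) (by simp) (by simp) (by simpa using hx)
      (by simp) (by simpa using hxv.symm) x (by simp) (hσv ▸ hux.symm)
  · have hσv : C.formPerm v = b := by
      simpa [hσ] using List.formPerm_append_cons_cons (s := u :: A) (by simpa using hut.nodup)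
    have hσu : C.formPerm u = (A ++ [v]).head (by simp) := by
      rw [hσ]
      cases A with
      | nil => exact List.formPerm_append_cons_cons (s := []) hut.nodup
      | cons a A => exact List.formPerm_append_cons_cons (s := []) hut.nodup
    rw [hσv, hσu] at hadj
    have hlonger := hC.length_le _ (IsCycleList.insert_reverse (P := A ++ [v]) (Q := b :: B)
      (by simpa using hut) (by simp) (by simpa using hr.mem_iff.not.1 hx) hux (by simpa using hxv)
      (by simpa [List.head?_eq_some_head] using hadj))
    have := hr.perm.length_eq
    simp only [List.length_cons, List.length_append, List.length_reverse] at hlonger this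
    omega

theorem not_adj_formPerm {u x v : V} (hu : u ∈ C) (hx : x ∉ C) (hux : G.Adj u x)
    (hxv : G.Adj x v) : ¬ G.Adj (C.formPerm u) (C.formPerm v) := by
  by_cases hv : v ∈ C
  · exact hC.not_adj_formPerm_of_mem hu hx hux hv hxv
  · rw [List.formPerm_apply_of_notMem hv, G.adj_comm]
    exact hC.not_adj_of_insert hu (L := [x, v]) (by simp) (by simpa using hxv.ne)
      (by simp [hx, hv]) (by simpa using hxv) (by simpa using hux) v (by simp)

end IsLongestCycleList

theorem deg_add_deg_lt_ncard_Mball [Finite V] (f : Equiv.Perm V) (hf : ∀ v, G.edist v (f v) ≤ 1)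
    {a b p : V} (hab : G.edist a b ≤ 2) (hap : G.edist a p ≤ 3)
    (hcross : ∀ v, G.Adj a v → ¬ G.Adj b (f v)) (hbp : ¬ G.Adj b p)
    (hfp : ∀ v, G.Adj a v → f v ≠ p) :
    deg G a + deg G b < (Mball G 3 a).ncard := by
  have hdisj : Disjoint (f '' G.neighborSet a) (G.neighborSet b) := by
    rw [Set.disjoint_left]
    rintro _ ⟨v, hav, rfl⟩ hbv
    exact hcross v hav hbv
  have hp : p ∉ f '' G.neighborSet a ∪ G.neighborSet b := by
    rintro (⟨v, hav, hvp⟩ | hbp')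
    · exact hfp v hav hvp
    · exact hbp hbp'
  have hsub : insert p (f '' G.neighborSet a ∪ G.neighborSet b) ⊆ Mball G 3 a := by
    rintro w (rfl | ⟨v, hav, rfl⟩ | hbw)
    · exact hap
    · calc G.edist a (f v) ≤ G.edist a v + G.edist v (f v) := SimpleGraph.edist_triangle
        _ ≤ 1 + 1 := add_le_add hav.edist_le_one (hf v)
        _ ≤ 3 := by norm_num
    · calc G.edist a w ≤ G.edist a b + G.edist b w := SimpleGraph.edist_triangle
        _ ≤ 2 + 1 := add_le_add hab hbw.edist_le_one
        _ = 3 := by norm_num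
  calc deg G a + deg G b < (insert p (f '' G.neighborSet a ∪ G.neighborSet b)).ncard := by
        rw [Set.ncard_insert_of_notMem hp, Set.ncard_union_eq hdisj,
          Set.ncard_image_of_injective _ f.injective, deg, deg]
        omega
    _ ≤ (Mball G 3 a).ncard := Set.ncard_le_ncard hsub

theorem IsLongestCycleList.mem_of_ncard_Mball_le [DecidableEq V] [Finite V] {C : List V}
    (hC : IsLongestCycleList G C) (hconn : G.Connected)
    (hdeg : ∀ u, (Mball G 3 u).ncard ≤ 2 * deg G u) (w : V) : w ∈ C := by
  by_contra hw
  obtain ⟨u, hu, x, hx, hux⟩ :=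
    hconn.preconnected.exists_adj_mem_notMem (S := {v | v ∈ C})
      (List.head_mem hC.isCycleList.ne_nil) hw
  set σ := C.formPerm
  have hcross : ∀ v, G.Adj x v → ¬ G.Adj (σ u) (σ v) := fun _ =>
    hC.not_adj_formPerm hu hx hux
  have hxy : ¬ G.Adj x (σ u) := fun h =>
    hcross _ h (hC.isCycleList.adj_formPerm (List.formPerm_apply_mem_of_mem hu))
  have hσx : σ x = x := List.formPerm_apply_of_notMem hx
  have hdist : G.edist x (σ u) ≤ 2 :=
    calc G.edist x (σ u) ≤ G.edist x u + G.edist u (σ u) := SimpleGraph.edist_triangle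
      _ ≤ 1 + 1 := add_le_add hux.symm.edist_le_one (hC.isCycleList.edist_formPerm_le_one u)
      _ = 2 := by norm_num
  have hx_lt := deg_add_deg_lt_ncard_Mball σ hC.isCycleList.edist_formPerm_le_one hdist
    (by simp) hcross (fun h => hxy h.symm)
    fun v hxv h => hxv.ne (σ.injective (h.trans hσx.symm)).symm
  have hy_lt := deg_add_deg_lt_ncard_Mball σ.symm hC.isCycleList.edist_formPerm_symm_le_one
    (p := x) (edist_comm ▸ hdist) (edist_comm ▸ hdist.trans (by norm_num))
    (fun v hyv hxv => hcross _ hxv (by simpa using hyv)) G.irrefl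
    fun v hyv h => hxy (by rw [← σ.apply_symm_apply v, h, hσx] at hyv; exact hyv.symm)
  have := hdeg x
  have := hdeg (σ u)
  omega

theorem card_le_two_of_deg_eq_one [Fintype V] (hconn : G.Connected)
    (hdeg : ∀ u, (Mball G 3 u).ncard ≤ 2 * deg G u) {u : V} (hu : deg G u = 1) :
    Fintype.card V ≤ 2 := by
  obtain ⟨v, hNu⟩ := Set.ncard_eq_one.1 hu
  have huv : G.Adj u v := show v ∈ G.neighborSet u by simp [hNu]
  have hball : insert v (G.neighborSet v) ⊆ Mball G 3 u := by
    have huv1 : G.edist u v ≤ 1 := huv.edist_le_one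
    rintro w (rfl | hvw)
    · exact huv1.trans (by norm_num)
    · calc G.edist u w ≤ G.edist u v + G.edist v w := SimpleGraph.edist_triangle
        _ ≤ 1 + 1 := add_le_add huv1 hvw.edist_le_one
        _ ≤ 3 := by norm_num
  have hNv : G.neighborSet v = {u} := by
    have hv := Set.ncard_le_ncard hball
    rw [Set.ncard_insert_of_notMem G.notMem_neighborSet_self] at hv
    refine (Set.eq_of_subset_of_ncard_le (by simpa using huv.symm) ?_).symm
    have := hdeg u
    rw [hu] at this
    rw [Set.ncard_singleton]
    omega
  have hall : ∀ w, w ∈ ({u, v} : Set V) := by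
    by_contra! ⟨w, hw⟩
    obtain ⟨a, ha, b, hb, hab⟩ :=
      hconn.preconnected.exists_adj_mem_notMem (Set.mem_insert u {v}) hw
    rcases ha with rfl | rfl
    · exact hb (Or.inr (hNu ▸ G.mem_neighborSet a b |>.2 hab))
    · exact hb (Or.inl (hNv ▸ G.mem_neighborSet a b |>.2 hab))
  calc Fintype.card V = (Set.univ : Set V).ncard := by simp
    _ ≤ ({u, v} : Set V).ncard := Set.ncard_le_ncard fun w _ => hall w
    _ ≤ 2 := (Set.ncard_insert_le u {v}).trans (by simp)

theorem exists_isCycleList [Fintype V] (hconn : G.Connected) (h3 : 3 ≤ Fintype.card V)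
    (hdeg : ∀ u, (Mball G 3 u).ncard ≤ 2 * deg G u) : ∃ l, IsCycleList G l := by
  classical
  have hcyclic : ¬ G.IsAcyclic := fun hacyc => by
    have : Nontrivial V := Fintype.one_lt_card_iff_nontrivial.1 (by omega)
    obtain ⟨u, hu⟩ := IsTree.exists_vert_degree_one_of_nontrivial ⟨hconn, hacyc⟩
    have hu' : deg G u = 1 := by
      rw [deg, ← Nat.card_coe_set_eq, Nat.card_eq_fintype_card, card_neighborSet_eq_degree, hu]
    have := card_le_two_of_deg_eq_one hconn hdeg hu'
    omega
  simp only [IsAcyclic, not_forall, not_not] at hcyclic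
  obtain ⟨v, c, hc⟩ := hcyclic
  exact ⟨_, hc.isCycleList_support_tail⟩

end

/-- Let `G` be a connected finite graph on at least three vertices such that
`d(u) ≥ (1/2)|M_3(u)|` for every vertex `u`. Then `G` is Hamiltonian. -/
theorem stmt_17 {V : Type*} [Fintype V] [DecidableEq V] (G : SimpleGraph V)
    (h3 : 3 ≤ Fintype.card V) (hconn : G.Connected)
    (hdeg : ∀ u : V, (1 / 2 : ℝ) * ((Mball G 3 u).ncard : ℝ) ≤ (deg G u : ℝ)) :
    G.IsHamiltonian := by
  have hdeg' : ∀ u, (Mball G 3 u).ncard ≤ 2 * deg G u := fun u => by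
    have := hdeg u
    exact_mod_cast (by linarith : ((Mball G 3 u).ncard : ℝ) ≤ 2 * deg G u)
  obtain ⟨l, hl⟩ := exists_isCycleList hconn h3 hdeg'
  obtain ⟨C, hC⟩ := hl.exists_isLongestCycleList
  exact hC.isCycleList.isHamiltonian (hC.mem_of_ncard_Mball_le hconn hdeg')
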